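/- arXiv:2507.11234 — 7 statements merged into one kernel-verified Lean document; each statement's English description precedes it below -/
import Mathlib

section
/- Let u : ℕ → ℤ satisfy an order-d integer linear recurrence u_{n+d} = a_{d-1} u_{n+d-1} + … + a_0 u_n, and let p be a prime with p > d+1 and p ∤ a_0. Then there exists a positive integer M with 0 < M < p^{d²} such that for every ℓ ∈ {0, …, M−1} there is a continuous function F_ℓ : ℤ_p → ℤ_p satisfying F_ℓ(n) = u_{Mn+ℓ} for every natural number n (here n ∈ ℕ is viewed inside ℤ_p via the canonical embedding). -/
/-!
Reduced mod `p`, the companion matrix `A` of the recurrence is invertible since `p ∤ a₀`, so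
`A ∈ GL_d(𝔽_p)` and `A ^ M ≡ 1 (mod p)` for `M = |GL_d(𝔽_p)| < p ^ (d ^ 2)`. The binomial theorem
lifts this to `A ^ (M * t) ≡ 1 (mod p ^ (k + 1))` whenever `p ^ k ∣ t`; reading off the first
coordinate of `A ^ (M * t)` applied to a window of `d` consecutive terms gives
`u (M * n + ℓ) ≡ u (M * m + ℓ) (mod p ^ k)` whenever `n ≡ m (mod p ^ k)`. Thus `n ↦ u (M * n + ℓ)`
is uniformly continuous for the `p`-adic metric on `ℕ`, and extends to `ℤ_p` by density.
-/

open Polynomial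

/-- Writing `x = 1 + p * y`, this is the commutative case for `1 + p * X` in `ℤ[X]`,
evaluated at `y`. -/
theorem natCast_pow_succ_dvd_pow_pow_sub_one {R : Type*} [Ring R] {p : ℕ} {x : R}
    (h : (p : R) ∣ x - 1) (k : ℕ) : (p : R) ^ (k + 1) ∣ x ^ p ^ k - 1 := by
  obtain ⟨y, hy⟩ := h
  have hT : ((p : ℤ[X]) ^ (k + 1)) ∣ (1 + (p : ℤ[X]) * X) ^ p ^ k - 1 ^ p ^ k :=
    dvd_sub_pow_of_dvd_sub (by simp) k
  have hx : x = 1 + p * y := by rw [← hy]; abel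
  simpa [hx] using map_dvd (aeval y) hT

theorem natCast_pow_succ_dvd_pow_sub_one {R : Type*} [Ring R] {p : ℕ} {x : R}
    (h : (p : R) ∣ x - 1) {k t : ℕ} (ht : p ^ k ∣ t) : (p : R) ^ (k + 1) ∣ x ^ t - 1 :=
  (natCast_pow_succ_dvd_pow_pow_sub_one h k).trans (dvd_pow_sub_one_of_dvd ht)

namespace Matrix
variable {n : Type*} [Fintype n] [DecidableEq n]

theorem natCast_dvd_mulVec_apply {R : Type*} [Semiring R] {c : ℕ} {X : Matrix n n R}
    (h : (c : Matrix n n R) ∣ X) (w : n → R) (i : n) : (c : R) ∣ (X *ᵥ w) i := by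
  obtain ⟨Y, rfl⟩ := h
  rw [← mulVec_mulVec, natCast_mulVec]
  exact dvd_mul_right _ _

theorem natCast_dvd_of_map_eq_zero {p : ℕ} {X : Matrix n n ℤ}
    (h : X.map (Int.castRingHom (ZMod p)) = 0) : (p : Matrix n n ℤ) ∣ X := by
  have hX (i j : n) : (p : ℤ) ∣ X i j :=
    (ZMod.intCast_zmod_eq_zero_iff_dvd _ _).mp (congrFun (congrFun h i) j)
  choose Y hY using hX
  refine ⟨of Y, ?_⟩
  ext i j
  rw [hY, ← nsmul_eq_mul p (of Y)]
  simp

theorem natCast_dvd_pow_card_units_sub_one {p : ℕ} {A : Matrix n n ℤ}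
    (hA : IsUnit (A.map (Int.castRingHom (ZMod p)))) :
    (p : Matrix n n ℤ) ∣ A ^ Nat.card (Matrix n n (ZMod p))ˣ - 1 := by
  obtain ⟨U, hU⟩ := hA
  apply natCast_dvd_of_map_eq_zero
  rw [← RingHom.mapMatrix_apply, map_sub, map_pow, map_one, RingHom.mapMatrix_apply, ← hU,
    ← Units.val_pow_eq_pow_val, pow_card_eq_one', Units.val_one, sub_self]

theorem card_units_zmod_lt (p : ℕ) [Fact p.Prime] [Nonempty n] :
    Nat.card (Matrix n n (ZMod p))ˣ < p ^ (Fintype.card n ^ 2) := by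
  refine (natCard_units_lt _).trans_eq ?_
  simp [Matrix, sq, pow_mul]

end Matrix

namespace LinearRecurrence

open Matrix

variable {R S : Type*} [CommRing R] [CommRing S] (E : LinearRecurrence R)

def companion : Matrix (Fin E.order) (Fin E.order) R :=
  LinearMap.toMatrix' E.tupleSucc

def map (f : R →+* S) : LinearRecurrence S := ⟨E.order, f ∘ E.coeffs⟩

theorem companion_mulVec (x : Fin E.order → R) : E.companion *ᵥ x = E.tupleSucc x :=
  LinearMap.toMatrix'_mulVec _ x

theorem tupleSucc_apply (x : Fin E.order → R) (i : Fin E.order) :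
    E.tupleSucc x i = if h : (i : ℕ) + 1 < E.order then x ⟨i + 1, h⟩ else ∑ j, E.coeffs j * x j :=
  rfl

theorem companion_map (f : R →+* S) : E.companion.map f = (E.map f).companion := by
  ext i j
  change f (E.tupleSucc (Pi.single j 1) i) = if h : (i : ℕ) + 1 < E.order then
    (Pi.single j 1 : Fin E.order → S) ⟨i + 1, h⟩
    else ∑ k, f (E.coeffs k) * (Pi.single j 1 : Fin E.order → S) k
  rw [tupleSucc_apply]
  split_ifs <;> simp [Pi.single_apply, apply_ite f]

theorem tupleSucc_window {u : ℕ → R} (hu : E.IsSolution u) (n : ℕ) :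
    E.tupleSucc (fun i : Fin E.order => u (n + i)) = fun i : Fin E.order => u (n + 1 + i) := by
  ext i
  rw [tupleSucc_apply]
  split_ifs with h
  · simp only [Nat.add_assoc, Nat.add_comm 1]
  · rw [← hu n]
    congr 1
    omega

theorem companion_pow_mulVec_window {u : ℕ → R} (hu : E.IsSolution u) (n t : ℕ) :
    E.companion ^ t *ᵥ (fun i : Fin E.order => u (n + i)) =
      fun i : Fin E.order => u (n + t + i) := by
  induction t with
  | zero => simp
  | succ t ih =>
    rw [pow_succ', ← mulVec_mulVec, ih, companion_mulVec, tupleSucc_window E hu, Nat.add_assoc]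

theorem tupleSucc_injective {K : Type*} [Field K] (E : LinearRecurrence K) (h0 : 0 < E.order)
    (ha : E.coeffs ⟨0, h0⟩ ≠ 0) : Function.Injective E.tupleSucc := by
  rw [← LinearMap.ker_eq_bot, LinearMap.ker_eq_bot']
  intro x hx
  have hpos : ∀ i : Fin E.order, (i : ℕ) ≠ 0 → x i = 0
    | ⟨0, _⟩, hi => absurd rfl hi
    | ⟨j + 1, h⟩, _ => by simpa [tupleSucc_apply, h] using congrFun hx ⟨j, by omega⟩
  have hlast := congrFun hx ⟨E.order - 1, by omega⟩
  have hsum : ∑ j, E.coeffs j * x j = E.coeffs ⟨0, h0⟩ * x ⟨0, h0⟩ :=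
    Finset.sum_eq_single _ (fun j _ hj => by rw [hpos j (by simpa [Fin.ext_iff] using hj),
      mul_zero]) (by simp)
  rw [tupleSucc_apply, dif_neg (by simp; omega), Pi.zero_apply, hsum] at hlast
  ext i
  by_cases hi : (i : ℕ) = 0
  · obtain rfl : i = ⟨0, h0⟩ := Fin.ext hi
    simpa [ha] using hlast
  · exact hpos i hi

theorem isUnit_companion {K : Type*} [Field K] (E : LinearRecurrence K) (h0 : 0 < E.order)
    (ha : E.coeffs ⟨0, h0⟩ ≠ 0) : IsUnit E.companion := by
  rw [← mulVec_injective_iff_isUnit, funext E.companion_mulVec]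
  exact E.tupleSucc_injective h0 ha

theorem IsSolution.pow_succ_dvd_sub {E : LinearRecurrence ℤ} {u : ℕ → ℤ} (hu : E.IsSolution u)
    (h0 : 0 < E.order) {p M : ℕ} (hM : (p : Matrix _ _ ℤ) ∣ E.companion ^ M - 1) {k t : ℕ}
    (ht : p ^ k ∣ t) (N : ℕ) : (p : ℤ) ^ (k + 1) ∣ u (N + M * t) - u N := by
  have hwindow : u (N + M * t) - u N
      = (((E.companion ^ M) ^ t - 1) *ᵥ fun i : Fin E.order => u (N + i)) ⟨0, h0⟩ := by
    rw [sub_mulVec, ← pow_mul, E.companion_pow_mulVec_window hu, one_mulVec]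
    rfl
  have hpow : ((p ^ (k + 1) : ℕ) : Matrix _ _ ℤ) ∣ (E.companion ^ M) ^ t - 1 := by
    exact_mod_cast natCast_pow_succ_dvd_pow_sub_one hM ht
  rw [hwindow]
  exact_mod_cast natCast_dvd_mulVec_apply hpow _ _

theorem IsSolution.pow_dvd_sub_of_pow_dvd_sub {E : LinearRecurrence ℤ} {u : ℕ → ℤ}
    (hu : E.IsSolution u) (h0 : 0 < E.order) {p M : ℕ}
    (hM : (p : Matrix _ _ ℤ) ∣ E.companion ^ M - 1) (ℓ : ℕ) {k n m : ℕ}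
    (h : (p : ℤ) ^ k ∣ (n - m : ℤ)) : (p : ℤ) ^ k ∣ u (M * n + ℓ) - u (M * m + ℓ) := by
  wlog hmn : m ≤ n generalizing n m
  · exact dvd_sub_comm.mp (this (dvd_sub_comm.mp h) (by omega))
  obtain ⟨t, rfl⟩ := Nat.exists_eq_add_of_le hmn
  have ht : p ^ k ∣ t := by exact_mod_cast (by simpa using h : (p : ℤ) ^ k ∣ t)
  rw [show M * (m + t) + ℓ = M * m + ℓ + M * t by ring]
  exact (pow_dvd_pow _ k.le_succ).trans (hu.pow_succ_dvd_sub h0 hM ht _)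

end LinearRecurrence

namespace PadicInt

variable {p : ℕ} [Fact p.Prime]

theorem exists_continuous_extension_of_dvd (f : ℕ → ℤ)
    (hf : ∀ k n m : ℕ, (p : ℤ) ^ k ∣ (n - m : ℤ) → (p : ℤ) ^ k ∣ f n - f m) :
    ∃ F : ℤ_[p] → ℤ_[p], Continuous F ∧ ∀ n : ℕ, F n = f n := by
  let g : Set.range (Nat.cast : ℕ → ℤ_[p]) → ℤ_[p] := fun x => f (Set.rangeSplitting Nat.cast x)
  have hg (n : ℕ) : g (Set.rangeFactorization Nat.cast n) = f n := by
    simp only [g, Set.rightInverse_rangeSplitting Nat.cast_injective n]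
  have hg_unif : UniformContinuous g := by
    have hp : (1 : ℝ) < p := by exact_mod_cast (Fact.out : p.Prime).one_lt
    rw [Metric.uniformContinuous_iff]
    intro ε hε
    obtain ⟨k, hk⟩ := exists_pow_lt_of_lt_one hε (inv_lt_one_of_one_lt₀ hp)
    rw [inv_pow, ← zpow_natCast, ← zpow_neg] at hk
    refine ⟨(p : ℝ) ^ (-(k : ℤ)), zpow_pos (by linarith) _, ?_⟩
    rintro ⟨_, n, rfl⟩ ⟨_, m, rfl⟩ hnm
    change dist (g (Set.rangeFactorization Nat.cast n)) (g (Set.rangeFactorization Nat.cast m)) < ε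
    have hnm' : ‖((n - m : ℤ) : ℤ_[p])‖ ≤ (p : ℝ) ^ (-(k : ℤ)) := by
      rw [Subtype.dist_eq, dist_eq_norm] at hnm
      push_cast
      exact hnm.le
    rw [hg, hg, dist_eq_norm, ← Int.cast_sub]
    refine lt_of_le_of_lt ?_ hk
    rw [norm_int_le_pow_iff_dvd] at hnm' ⊢
    exact hf k n m hnm'
  have hdense : Dense (Set.range (Nat.cast : ℕ → ℤ_[p])) := denseRange_natCast
  refine ⟨hdense.extend g, (hdense.uniformContinuous_extend hg_unif).continuous, fun n => ?_⟩
  rw [← hg n]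
  exact hdense.extend_of_ind hg_unif (Set.rangeFactorization Nat.cast n)

end PadicInt

theorem lrs_padic_interpolation_general (p d : ℕ) [hp : Fact p.Prime] (hd : 0 < d)
    (a : Fin d → ℤ) (u : ℕ → ℤ)
    (hrec : ∀ n : ℕ, u (n + d) = ∑ i : Fin d, a i * u (n + i))
    (ha0 : ¬ ((p : ℤ) ∣ a ⟨0, hd⟩)) :
    ∃ M : ℕ, 0 < M ∧ M < p ^ (d ^ 2) ∧
      ∀ ℓ < M, ∃ F : ℤ_[p] → ℤ_[p], Continuous F ∧
        ∀ n : ℕ, F (n : ℤ_[p]) = ((u (M * n + ℓ) : ℤ) : ℤ_[p]) := by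
  let E : LinearRecurrence ℤ := ⟨d, a⟩
  have hu : E.IsSolution u := hrec
  have hA : IsUnit (E.companion.map (Int.castRingHom (ZMod p))) := by
    rw [E.companion_map]
    exact (E.map _).isUnit_companion hd (mt (ZMod.intCast_zmod_eq_zero_iff_dvd _ p).mp ha0)
  have : NeZero d := ⟨hd.ne'⟩
  refine ⟨Nat.card (Matrix (Fin d) (Fin d) (ZMod p))ˣ, Nat.card_pos, ?_, fun ℓ _ => ?_⟩
  · simpa using Matrix.card_units_zmod_lt (n := Fin d) p
  · exact PadicInt.exists_continuous_extension_of_dvd _ fun k n m h =>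
      hu.pow_dvd_sub_of_pow_dvd_sub hd (Matrix.natCast_dvd_pow_card_units_sub_one hA) ℓ h

/-- Let `u : ℕ → ℤ` satisfy an order-`d` integer linear recurrence
`u (n+d) = a_{d-1} u (n+d-1) + … + a_0 u n`, and `p` a prime with `p > d + 1` and `p ∤ a_0`.
Then there is `0 < M < p ^ (d^2)` such that for every `ℓ < M`, the subsequence
`n ↦ u (M*n + ℓ)` extends to a continuous function `F_ℓ : ℤ_p → ℤ_p`. -/
theorem lrs_padic_interpolation (p d : ℕ) [hp : Fact p.Prime] (hd : 0 < d)
    (hpd : d + 1 < p) (a : Fin d → ℤ) (u : ℕ → ℤ)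
    (hrec : ∀ n : ℕ, u (n + d) = ∑ i : Fin d, a i * u (n + i))
    (ha0 : ¬ ((p : ℤ) ∣ a ⟨0, hd⟩)) :
    ∃ M : ℕ, 0 < M ∧ M < p ^ (d ^ 2) ∧
      ∀ ℓ < M, ∃ F : ℤ_[p] → ℤ_[p], Continuous F ∧
        ∀ n : ℕ, F (n : ℤ_[p]) = ((u (M * n + ℓ) : ℤ) : ℤ_[p]) :=
  lrs_padic_interpolation_general p d (hp := hp) hd a u hrec ha0
end

section
/- Let A and B be d×d integer matrices, let p be an integer, and let M be a positive integer such that A^M = I + pB. Let x, y ∈ ℤ^d and define u_n = xᵀ Aⁿ y for n ∈ ℕ. Then for all k, ℓ ∈ ℕ: Σ_{j=0}^{k} (−1)^{k−j} C(k,j) u_{Mj+ℓ} = p^k · (xᵀ B^k A^ℓ y). That is, the k-th iterated forward difference at 0 of the sequence n ↦ u_{Mn+ℓ} equals p^k xᵀ B^k A^ℓ y. -/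
/-!
The alternating binomial sum of `j ↦ u (M * j + ℓ) = xᵀ (A ^ M) ^ j A ^ ℓ y` is
`xᵀ (A ^ M - 1) ^ k A ^ ℓ y` by the binomial theorem, and `A ^ M - 1 = p • B`.
-/

open Matrix Finset

theorem sub_one_pow_eq_sum_zsmul {S : Type*} [Ring S] (a : S) (k : ℕ) :
    (a - 1) ^ k = ∑ j ∈ range (k + 1), ((-1 : ℤ) ^ (k - j) * k.choose j) • a ^ j := by
  rw [sub_eq_add_neg, (Commute.neg_one_right a).add_pow]
  refine sum_congr rfl fun j _ => ?_
  rw [zsmul_eq_mul, Int.cast_mul, Int.cast_pow, Int.cast_neg, Int.cast_one, Int.cast_natCast,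
    ((Commute.neg_one_right a).pow_pow j (k - j)).eq, mul_assoc, mul_assoc,
    (Nat.cast_commute _ _).eq]

theorem lrs_subsequence_forward_difference_general (d : ℕ) (A B : Matrix (Fin d) (Fin d) ℤ)
    (p : ℤ) (M : ℕ) (hAM : A ^ M = 1 + p • B)
    (x y : Fin d → ℤ) (u : ℕ → ℤ) (hu : ∀ n, u n = x ⬝ᵥ (A ^ n) *ᵥ y) :
    ∀ k ℓ : ℕ, ∑ j ∈ Finset.range (k + 1),
        (-1 : ℤ) ^ (k - j) * (k.choose j : ℤ) * u (M * j + ℓ) =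
      p ^ k * (x ⬝ᵥ (B ^ k * A ^ ℓ) *ᵥ y) := by
  intro k ℓ
  have hpB : A ^ M - 1 = p • B := by rw [hAM, add_sub_cancel_left]
  calc ∑ j ∈ range (k + 1), (-1 : ℤ) ^ (k - j) * (k.choose j : ℤ) * u (M * j + ℓ)
      = x ⬝ᵥ (∑ j ∈ range (k + 1),
          ((-1 : ℤ) ^ (k - j) * k.choose j) • (A ^ M) ^ j * A ^ ℓ) *ᵥ y := by
        simp only [sum_mulVec, dotProduct_sum, hu, pow_add, pow_mul, smul_mul, smul_mulVec,
          dotProduct_smul, smul_eq_mul]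
    _ = x ⬝ᵥ ((p • B) ^ k * A ^ ℓ) *ᵥ y := by
        rw [← sum_mul, ← sub_one_pow_eq_sum_zsmul, hpB]
    _ = p ^ k * (x ⬝ᵥ (B ^ k * A ^ ℓ) *ᵥ y) := by
        rw [smul_pow, smul_mul, smul_mulVec, dotProduct_smul, smul_eq_mul]

/-- If `A ^ M = I + p • B` for `d × d` integer matrices `A, B`, an integer `p`
and a positive integer `M`, and `u n = xᵀ Aⁿ y`, then the `k`-th iterated forward difference
at `0` of `n ↦ u (M*n + ℓ)` satisfies
`∑_{j=0}^{k} (−1)^{k−j} C(k,j) u (M*j + ℓ) = p^k (xᵀ B^k A^ℓ y)`. -/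
theorem lrs_subsequence_forward_difference (d : ℕ) (A B : Matrix (Fin d) (Fin d) ℤ)
    (p : ℤ) (M : ℕ) (hM : 0 < M) (hAM : A ^ M = 1 + p • B)
    (x y : Fin d → ℤ) (u : ℕ → ℤ) (hu : ∀ n, u n = x ⬝ᵥ (A ^ n) *ᵥ y) :
    ∀ k ℓ : ℕ, ∑ j ∈ Finset.range (k + 1),
        (-1 : ℤ) ^ (k - j) * (k.choose j : ℤ) * u (M * j + ℓ) =
      p ^ k * (x ⬝ᵥ (B ^ k * A ^ ℓ) *ᵥ y) :=
  lrs_subsequence_forward_difference_general d A B p M hAM x y u hu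
end

section
/- Let p be a prime, A a d×d integer matrix, and M a positive integer with A^M ≡ I (mod p). Let x, y ∈ ℤ^d and define u_n = xᵀ Aⁿ y for n ∈ ℕ. Then for all k, ℓ ∈ ℕ, the integer p^k divides Σ_{j=0}^{k} (−1)^{k−j} C(k,j) u_{Mj+ℓ}. -/
open Matrix Finset

private lemma pow_entries_dvd {d : ℕ} (p : ℤ) (C : Matrix (Fin d) (Fin d) ℤ)
    (h : ∀ i j, p ∣ C i j) : ∀ k, ∀ i j, p ^ k ∣ (C ^ k) i j := by
  intro k
  induction k with
  | zero => intro i j; simp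
  | succ n ih =>
    intro i j
    rw [pow_succ, pow_succ, Matrix.mul_apply]
    refine Finset.dvd_sum fun l _ => ?_
    exact mul_dvd_mul (ih i l) (h l j)

/-- Let `p` be a prime, `A` a `d × d` integer matrix and `M` a positive
integer with `A ^ M ≡ I (mod p)`. If `u n = xᵀ Aⁿ y`, then for all `k, ℓ ∈ ℕ` the integer
`p^k` divides `∑_{j=0}^{k} (−1)^{k−j} C(k,j) u (M*j + ℓ)`. -/
theorem pow_p_dvd_forward_difference (p d : ℕ) (hp : p.Prime)
    (A : Matrix (Fin d) (Fin d) ℤ) (M : ℕ) (hM : 0 < M)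
    (hAM : ∀ i j, (p : ℤ) ∣ (A ^ M - 1) i j)
    (x y : Fin d → ℤ) (u : ℕ → ℤ) (hu : ∀ n, u n = x ⬝ᵥ (A ^ n) *ᵥ y) :
    ∀ k ℓ : ℕ, (p : ℤ) ^ k ∣
      ∑ j ∈ Finset.range (k + 1),
        (-1 : ℤ) ^ (k - j) * (k.choose j : ℤ) * u (M * j + ℓ) := by
  intro k ℓ
  have key : (∑ j ∈ Finset.range (k + 1),
      (-1 : ℤ) ^ (k - j) * (k.choose j : ℤ) * u (M * j + ℓ))
      = x ⬝ᵥ (((A ^ M - 1) ^ k * A ^ ℓ) *ᵥ y) := by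
    have hadd : ∀ (s : Finset ℕ) (g : ℕ → Matrix (Fin d) (Fin d) ℤ),
        x ⬝ᵥ (∑ i ∈ s, g i) *ᵥ y = ∑ i ∈ s, x ⬝ᵥ (g i) *ᵥ y := by
      intro s g
      induction s using Finset.cons_induction with
      | empty => simp [Matrix.zero_mulVec]
      | cons a s ha ih => rw [Finset.sum_cons, Finset.sum_cons, Matrix.add_mulVec, dotProduct_add, ih]
    rw [sub_eq_add_neg, Commute.add_pow (Commute.neg_one_right (A ^ M)), Finset.sum_mul,
      hadd]
    refine Finset.sum_congr rfl fun j hj => ?_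
    have e1 : (-1 : Matrix (Fin d) (Fin d) ℤ) ^ (k - j)
        * ((k.choose j : ℕ) : Matrix (Fin d) (Fin d) ℤ)
        = ((((-1 : ℤ) ^ (k - j) * (k.choose j : ℤ)) : ℤ) : Matrix (Fin d) (Fin d) ℤ) := by
      push_cast
      rfl
    have this : (A ^ M) ^ j * (-1 : Matrix (Fin d) (Fin d) ℤ) ^ (k - j)
        * ((k.choose j : ℕ) : Matrix (Fin d) (Fin d) ℤ) * A ^ ℓ
        = ((-1 : ℤ) ^ (k - j) * (k.choose j : ℤ)) • A ^ (M * j + ℓ) := by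
      rw [mul_assoc ((A ^ M) ^ j), e1,
        ← (Int.cast_commute ((-1 : ℤ) ^ (k - j) * (k.choose j : ℤ)) ((A ^ M) ^ j)).eq,
        mul_assoc, ← pow_mul, ← pow_add, ← zsmul_eq_mul]
    rw [this, hu, Matrix.smul_mulVec, dotProduct_smul, smul_eq_mul, mul_assoc]
  rw [key]
  unfold dotProduct
  refine Finset.dvd_sum fun i _ => ?_
  refine Dvd.dvd.mul_left ?_ _
  rw [Matrix.mulVec, dotProduct]
  refine Finset.dvd_sum fun j _ => ?_
  refine Dvd.dvd.mul_right ?_ _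
  rw [Matrix.mul_apply]
  refine Finset.dvd_sum fun l _ => ?_
  exact Dvd.dvd.mul_right (pow_entries_dvd (p : ℤ) _ hAM k i l) _
end

section
/- Let B and C be d×d integer matrices, let x, y ∈ ℤ^d, and define γ_k = xᵀ B^k C y for k ∈ ℕ. Let p be a prime and m ∈ ℕ. If p^m divides γ_i for every i ∈ {0, …, d−1}, then p^m divides γ_k for every k ∈ ℕ. -/
/-!
The matrices `M` with `p ^ m ∣ xᵀ M C y` form a `ℤ`-submodule, and by Cayley–Hamilton every
power of `B` is an integer combination of `B ^ 0, …, B ^ (d - 1)`.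
-/

open Matrix Polynomial

namespace Matrix

variable {R n : Type*} [CommRing R] [Fintype n] [DecidableEq n]

/-- `X ^ k %ₘ B.charpoly` has degree below `card n` and, by Cayley–Hamilton, evaluates to `B ^ k`. -/
theorem pow_mem_span_pow_lt_card (B : Matrix n n R) (k : ℕ) :
    B ^ k ∈ Submodule.span R ((B ^ ·) '' Set.Iio (Fintype.card n)) := by
  cases isEmpty_or_nonempty n
  · exact Subsingleton.elim (0 : Matrix n n R) (B ^ k) ▸ Submodule.zero_mem _
  nontriviality R
  have hdeg : (X ^ k %ₘ B.charpoly).natDegree < Fintype.card n := by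
    have hne : B.charpoly ≠ 1 := fun h =>
      (Fintype.card_ne_zero (α := n)) (by simpa [h] using B.charpoly_natDegree_eq_dim.symm)
    simpa [B.charpoly_natDegree_eq_dim] using natDegree_modByMonic_lt _ B.charpoly_monic hne
  rw [pow_eq_aeval_mod_charpoly, aeval_eq_sum_range' hdeg]
  exact Submodule.sum_mem _ fun i hi => Submodule.smul_mem _ _
    (Submodule.subset_span ⟨i, Finset.mem_range.mp hi, rfl⟩)

theorem pow_mem_of_forall_lt_card {B : Matrix n n R} {S : Submodule R (Matrix n n R)}
    (h : ∀ i < Fintype.card n, B ^ i ∈ S) (k : ℕ) : B ^ k ∈ S :=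
  Submodule.span_le.mpr (by rintro _ ⟨i, hi, rfl⟩; exact h i hi) (B.pow_mem_span_pow_lt_card k)

end Matrix

theorem pow_p_dvd_of_dvd_first_d_general (p d m : ℕ)
    (B C : Matrix (Fin d) (Fin d) ℤ) (x y : Fin d → ℤ) (γ : ℕ → ℤ)
    (hγ : ∀ k, γ k = x ⬝ᵥ (B ^ k * C) *ᵥ y)
    (hdvd : ∀ i < d, (p : ℤ) ^ m ∣ γ i) :
    ∀ k, (p : ℤ) ^ m ∣ γ k := by
  let form : Matrix (Fin d) (Fin d) ℤ →ₗ[ℤ] ℤ :=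
    { toFun := fun M => x ⬝ᵥ (M * C) *ᵥ y
      map_add' := fun M N => by simp only [add_mul, add_mulVec, dotProduct_add]
      map_smul' := fun c M => by simp only [smul_mul_assoc, smul_mulVec, dotProduct_smul]; rfl }
  intro k
  have hmem := pow_mem_of_forall_lt_card (B := B)
    (S := Submodule.comap form (Ideal.span {(p : ℤ) ^ m}))
    (fun i hi => by simpa [form, Ideal.mem_span_singleton, ← hγ] using hdvd i (by simpa using hi)) k
  simpa [form, Ideal.mem_span_singleton, ← hγ] using hmem

/-- Let `B, C` be `d × d` integer matrices, `x, y ∈ ℤ^d` and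
`γ k = xᵀ B^k C y`. If `p` is a prime, `m ∈ ℕ`, and `p^m` divides `γ i` for every
`i ∈ {0, …, d−1}`, then `p^m` divides `γ k` for every `k ∈ ℕ`. -/
theorem pow_p_dvd_of_dvd_first_d (p d m : ℕ) (hp : p.Prime)
    (B C : Matrix (Fin d) (Fin d) ℤ) (x y : Fin d → ℤ) (γ : ℕ → ℤ)
    (hγ : ∀ k, γ k = x ⬝ᵥ (B ^ k * C) *ᵥ y)
    (hdvd : ∀ i < d, (p : ℤ) ^ m ∣ γ i) :
    ∀ k, (p : ℤ) ^ m ∣ γ k :=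
  pow_p_dvd_of_dvd_first_d_general p d m B C x y γ hγ hdvd
end

section
/- Let p be a prime and d ≥ 1 an integer with p > d + 1. Let γ : ℕ → ℤ be a sequence such that γ_i ≠ 0 for some i ∈ {0, …, d−1}; set m = min_{0 ≤ i ≤ d−1} v_p(γ_i), and assume v_p(γ_k) ≥ m for all k ∈ ℕ. Then: (i) for every k ≥ d, the rational number p^k γ_k / k! is either zero or has p-adic valuation strictly greater than m + d − 1; (ii) min_{0 ≤ k ≤ d−1} v_p(p^k γ_k / k!) = min_{0 ≤ k ≤ d−1} v_p(p^k γ_k) ≤ m + d − 1. Consequently, the infimum over all k ∈ ℕ of v_p(p^k γ_k / k!) is attained at some index k ≤ d − 1, it equals min_{0 ≤ k ≤ d−1} v_p(p^k γ_k), and every index attaining this infimum is at most d − 1. -/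
/-!
For `k < p` the factorial `k!` is a `p`-adic unit, so for `k < d` dividing by it does not change
the valuation. For `k ≥ d`, Legendre's bound `(p - 1) v_p(k!) < k` with `p - 1 > d` gives
`v_p(k!) ≤ k - d`, hence `v_p(p^k γ_k / k!) ≥ m + d`. This lies strictly above the value
`i + m ≤ m + d - 1` taken by `v_p(p^i γ_i)` at an index `i < d` with `v_p(γ_i) = m`.
-/

open Finset

/-- The additive `p`-adic valuation on `ℚ_p`, with values in `WithTop ℤ` (`v_p 0 = ∞`). -/
noncomputable def vP (p : ℕ) [Fact p.Prime] (x : ℚ_[p]) : WithTop ℤ :=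
  Padic.addValuation x

open Nat

section
variable {p : ℕ} [hp : Fact p.Prime]

lemma vP_mul (x y : ℚ_[p]) : vP p (x * y) = vP p x + vP p y :=
  Padic.addValuation.map_mul x y

lemma vP_div (x y : ℚ_[p]) : vP p (x / y) = vP p x - vP p y :=
  Padic.addValuation.map_div

lemma vP_natCast {n : ℕ} (hn : n ≠ 0) : vP p n = (padicValNat p n : ℤ) := by
  rw [vP, Padic.addValuation.apply (by exact_mod_cast hn), Padic.valuation_natCast]

lemma vP_prime_pow (k : ℕ) : vP p ((p : ℚ_[p]) ^ k) = (k : ℤ) := by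
  rw [vP, AddValuation.map_pow, ← vP, vP_natCast hp.out.ne_zero, padicValNat_self]
  simp

lemma padicValNat_factorial_eq_zero_of_lt {k : ℕ} (hk : k < p) : padicValNat p k ! = 0 :=
  padicValNat.eq_zero_of_not_dvd fun h => (hp.out.dvd_factorial.mp h).not_gt hk

lemma padicValNat_factorial_add_le {d k : ℕ} (hpd : d + 1 < p) (hk : d ≤ k) :
    padicValNat p k ! + d ≤ k := by
  rcases lt_or_ge k p with hkp | hpk
  · rw [padicValNat_factorial_eq_zero_of_lt hkp]; omega
  · have hlt := sub_one_mul_padicValNat_factorial_lt_of_ne_zero p (n := k) (by omega)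
    have : (d + 1) * padicValNat p k ! < k :=
      (Nat.mul_le_mul_right _ (by omega)).trans_lt hlt
    nlinarith

lemma vP_div_factorial_of_lt (x : ℚ_[p]) {k : ℕ} (hk : k < p) :
    vP p (x / k !) = vP p x := by
  rw [vP_div, vP_natCast k.factorial_ne_zero, padicValNat_factorial_eq_zero_of_lt hk]
  simp

lemma lt_vP_prime_pow_mul_div_factorial {d k : ℕ} {m : ℤ} {x : ℚ_[p]} (hpd : d + 1 < p)
    (hk : d ≤ k) (hx : (m : WithTop ℤ) ≤ vP p x) :
    ((m + d - 1 : ℤ) : WithTop ℤ) < vP p ((p : ℚ_[p]) ^ k * x / k !) := by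
  have hfac := padicValNat_factorial_add_le hpd hk
  rw [vP_div, vP_mul, vP_prime_pow, vP_natCast k.factorial_ne_zero]
  generalize vP p x = v at hx ⊢
  induction v using WithTop.recTopCoe with
  | top => simpa using WithTop.coe_lt_top (m + d - 1)
  | coe n =>
    norm_cast at hx ⊢
    omega

end

lemma exists_lt_forall_le_of_inf_range_le_of_lt {α : Type*} [LinearOrder α] [OrderTop α]
    {f : ℕ → α} {d : ℕ} {B : α} (hB : (range d).inf f ≤ B) (hlarge : ∀ k, d ≤ k → B < f k) :
    ∃ k₀ < d, (∀ k, f k₀ ≤ f k) ∧ f k₀ = (range d).inf f ∧ ∀ k, f k = f k₀ → k < d := by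
  have hne : (range d).Nonempty := by
    by_contra h
    rw [not_nonempty_iff_eq_empty.mp h, inf_empty, top_le_iff] at hB
    exact (hlarge d le_rfl).ne_top hB
  obtain ⟨k₀, hk₀, hmin⟩ := exists_mem_eq_inf _ hne f
  have hk₀B : f k₀ ≤ B := hmin ▸ hB
  refine ⟨k₀, mem_range.mp hk₀, fun k => ?_, hmin.symm, fun k hk => ?_⟩
  · rcases lt_or_ge k d with hkd | hdk
    · exact hmin ▸ inf_le (mem_range.mpr hkd)
    · exact hk₀B.trans (hlarge k hdk).le
  · by_contra! hdk
    exact (hk₀B.trans_lt (hlarge k hdk)).ne' hk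

theorem valuation_min_attained_below_d_general (p d : ℕ) [hp : Fact p.Prime]
    (hpd : d + 1 < p) (γ : ℕ → ℤ) (m : ℤ)
    (hm_eq : ∃ i < d, vP p ((γ i : ℚ_[p])) = (m : WithTop ℤ))
    (hall : ∀ k : ℕ, (m : WithTop ℤ) ≤ vP p ((γ k : ℚ_[p]))) :
    (∀ k : ℕ, d ≤ k → γ k = 0 ∨
      ((m + d - 1 : ℤ) : WithTop ℤ) <
        vP p ((p : ℚ_[p]) ^ k * (γ k : ℚ_[p]) / (Nat.factorial k : ℚ_[p]))) ∧
    ((Finset.range d).inf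
        (fun k => vP p ((p : ℚ_[p]) ^ k * (γ k : ℚ_[p]) / (Nat.factorial k : ℚ_[p]))) =
      (Finset.range d).inf (fun k => vP p ((p : ℚ_[p]) ^ k * (γ k : ℚ_[p])))) ∧
    ((Finset.range d).inf (fun k => vP p ((p : ℚ_[p]) ^ k * (γ k : ℚ_[p]))) ≤
      ((m + d - 1 : ℤ) : WithTop ℤ)) ∧
    (∃ k₀ < d,
      (∀ k : ℕ, vP p ((p : ℚ_[p]) ^ k₀ * (γ k₀ : ℚ_[p]) / (Nat.factorial k₀ : ℚ_[p])) ≤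
          vP p ((p : ℚ_[p]) ^ k * (γ k : ℚ_[p]) / (Nat.factorial k : ℚ_[p]))) ∧
      (vP p ((p : ℚ_[p]) ^ k₀ * (γ k₀ : ℚ_[p]) / (Nat.factorial k₀ : ℚ_[p])) =
        (Finset.range d).inf (fun k => vP p ((p : ℚ_[p]) ^ k * (γ k : ℚ_[p])))) ∧
      (∀ k : ℕ, vP p ((p : ℚ_[p]) ^ k * (γ k : ℚ_[p]) / (Nat.factorial k : ℚ_[p])) =
          vP p ((p : ℚ_[p]) ^ k₀ * (γ k₀ : ℚ_[p]) / (Nat.factorial k₀ : ℚ_[p])) → k < d)) := by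
  have hlarge (k : ℕ) (hk : d ≤ k) :=
    lt_vP_prime_pow_mul_div_factorial (p := p) hpd hk (hall k)
  have hinf : (range d).inf (fun k => vP p ((p : ℚ_[p]) ^ k * γ k / k !)) =
      (range d).inf (fun k => vP p ((p : ℚ_[p]) ^ k * γ k)) :=
    inf_congr rfl fun k hk => vP_div_factorial_of_lt _ ((mem_range.mp hk).trans (by omega))
  obtain ⟨i, hi, hγi⟩ := hm_eq
  have hbound : (range d).inf (fun k => vP p ((p : ℚ_[p]) ^ k * γ k)) ≤
      ((m + d - 1 : ℤ) : WithTop ℤ) := by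
    refine (inf_le (mem_range.mpr hi)).trans ?_
    rw [vP_mul, vP_prime_pow, hγi]
    norm_cast
    omega
  obtain ⟨k₀, hk₀, hmin, hk₀inf, hargmin⟩ :=
    exists_lt_forall_le_of_inf_range_le_of_lt (hinf ▸ hbound) hlarge
  exact ⟨fun k hk => .inr (hlarge k hk), hinf, hbound, k₀, hk₀, hmin, hk₀inf.trans hinf, hargmin⟩

/-- Let `p` be a prime, `d ≥ 1` with `p > d + 1`, and `γ : ℕ → ℤ` with
`γ i ≠ 0` for some `i < d`.  Let `m = min_{i < d} v_p (γ i)` and suppose `v_p (γ k) ≥ m`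
for all `k`.  Then (i) for `k ≥ d` the number `p^k γ k / k!` is zero or has valuation
`> m + d − 1`; (ii) `min_{k < d} v_p (p^k γ k / k!) = min_{k < d} v_p (p^k γ k) ≤ m + d − 1`;
consequently the infimum over all `k` of `v_p (p^k γ k / k!)` is attained at some `k₀ < d`,
equals `min_{k < d} v_p (p^k γ k)`, and every index attaining it is `< d`. -/
theorem valuation_min_attained_below_d (p d : ℕ) [hp : Fact p.Prime]
    (hd : 1 ≤ d) (hpd : d + 1 < p) (γ : ℕ → ℤ)
    (hne : ∃ i < d, γ i ≠ 0) (m : ℤ)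
    (hm_le : ∀ i < d, (m : WithTop ℤ) ≤ vP p ((γ i : ℚ_[p])))
    (hm_eq : ∃ i < d, vP p ((γ i : ℚ_[p])) = (m : WithTop ℤ))
    (hall : ∀ k : ℕ, (m : WithTop ℤ) ≤ vP p ((γ k : ℚ_[p]))) :
    (∀ k : ℕ, d ≤ k → γ k = 0 ∨
      ((m + d - 1 : ℤ) : WithTop ℤ) <
        vP p ((p : ℚ_[p]) ^ k * (γ k : ℚ_[p]) / (Nat.factorial k : ℚ_[p]))) ∧
    ((Finset.range d).inf
        (fun k => vP p ((p : ℚ_[p]) ^ k * (γ k : ℚ_[p]) / (Nat.factorial k : ℚ_[p]))) =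
      (Finset.range d).inf (fun k => vP p ((p : ℚ_[p]) ^ k * (γ k : ℚ_[p])))) ∧
    ((Finset.range d).inf (fun k => vP p ((p : ℚ_[p]) ^ k * (γ k : ℚ_[p]))) ≤
      ((m + d - 1 : ℤ) : WithTop ℤ)) ∧
    (∃ k₀ < d,
      (∀ k : ℕ, vP p ((p : ℚ_[p]) ^ k₀ * (γ k₀ : ℚ_[p]) / (Nat.factorial k₀ : ℚ_[p])) ≤
          vP p ((p : ℚ_[p]) ^ k * (γ k : ℚ_[p]) / (Nat.factorial k : ℚ_[p]))) ∧
      (vP p ((p : ℚ_[p]) ^ k₀ * (γ k₀ : ℚ_[p]) / (Nat.factorial k₀ : ℚ_[p])) =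
        (Finset.range d).inf (fun k => vP p ((p : ℚ_[p]) ^ k * (γ k : ℚ_[p])))) ∧
      (∀ k : ℕ, vP p ((p : ℚ_[p]) ^ k * (γ k : ℚ_[p]) / (Nat.factorial k : ℚ_[p])) =
          vP p ((p : ℚ_[p]) ^ k₀ * (γ k₀ : ℚ_[p]) / (Nat.factorial k₀ : ℚ_[p])) → k < d)) :=
  valuation_min_attained_below_d_general p d (hp := hp) hpd γ m hm_eq hall
end

section
/- Let p be a prime, and let b : ℕ → ℤ_p and β : ℕ → ℤ_p be sequences with b not identically zero, such that |b_j|_p → 0 as j → ∞, |β_k / k!|_p → 0 as k → ∞ (where β_k/k! ∈ ℚ_p), and such that for every x ∈ ℤ_p the two convergent series agree: Σ_{j=0}^{∞} b_j x^j = Σ_{k=0}^{∞} β_k · binom(x,k). Define V = min_{j} v_p(b_j), let j₀ be the largest index j with v_p(b_j) = V, define V' = min_{k} v_p(β_k / k!), and let k₀ be the largest index k with v_p(β_k/k!) = V' (these extrema exist since the valuations tend to ∞). Then V = V' and j₀ = k₀. -/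
open Filter

/-!
By Mahler's theorem `β k = Δᵏ f 0` for `f x = ∑ b j * x ^ j`, and `Δᵏ (x ↦ x ^ j) 0 = k! S(j, k)`
with `S` the Stirling numbers of the second kind. Hence `β k / k! = ∑ j, S(j, k) * b j`: the
sequence `β k / k!` is the image of `b` under an upper unitriangular matrix with integral
entries. In an ultrametric ring such a matrix preserves the largest norm of a null sequence and
the last index `j₀` where it is attained: for `k > j₀` every term of the sum is smaller than
`‖b j₀‖`, while for `k = j₀` the diagonal term `b j₀` dominates the others.
-/

open Finset Nat
open scoped fwdDiff Topology

theorem fwdDiff_iter_succ_id_mul_apply {R : Type*} [CommRing R] (f : R → R) (n : ℕ) (x : R) :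
    Δ_[1] ^[n + 1] (fun y ↦ y * f y) x =
      x * Δ_[1] ^[n + 1] f x + (n + 1) * Δ_[1] ^[n] f (x + 1) := by
  induction n generalizing x with
  | zero =>
    simp only [zero_add, Function.iterate_one, Function.iterate_zero_apply, fwdDiff, cast_zero]
    ring
  | succ n ih =>
    rw [Function.iterate_succ_apply', funext ih]
    simp only [fwdDiff, Function.iterate_succ_apply']
    push_cast
    ring

theorem fwdDiff_iter_pow_apply_zero {R : Type*} [CommRing R] (j k : ℕ) :
    Δ_[1] ^[k] (fun r : R ↦ r ^ j) 0 = k ! * stirlingSecond j k := by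
  induction j generalizing k with
  | zero =>
    cases k with
    | zero => simp
    | succ k => rw [fwdDiff_iter_pow_eq_zero_of_lt k.succ_pos]; simp
  | succ j ih =>
    cases k with
    | zero => simp
    | succ k =>
      have hshift : Δ_[1] ^[k] (fun r : R ↦ r ^ j) 1 =
          Δ_[1] ^[k] (fun r : R ↦ r ^ j) 0 + Δ_[1] ^[k + 1] (fun r : R ↦ r ^ j) 0 := by
        rw [Function.iterate_succ_apply', fwdDiff, zero_add]
        abel
      simp_rw [_root_.pow_succ', fwdDiff_iter_succ_id_mul_apply, zero_add, zero_mul, hshift, ih,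
        stirlingSecond_succ_succ, factorial_succ]
      push_cast
      ring

theorem fwdDiff_iter_tsum_apply {M G ι : Type*} [AddCommMonoid M] [AddCommGroup G]
    [TopologicalSpace G] [IsTopologicalAddGroup G] [T2Space G] (h : M) {f : ι → M → G}
    (hf : ∀ x, Summable (f · x)) (n : ℕ) (y : M) :
    Δ_[h] ^[n] (fun x ↦ ∑' i, f i x) y = ∑' i, Δ_[h] ^[n] (f i) y := by
  simp only [fwdDiff_iter_eq_sum_shift]
  rw [Summable.tsum_finsetSum fun k _ ↦ (hf _).const_smul _]
  simp_rw [Summable.tsum_const_smul _ (hf _)]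

theorem IsUltrametricDist.norm_tsum_lt_of_forall_norm_lt {ι E : Type*} [SeminormedAddCommGroup E]
    [IsUltrametricDist E] {f : ι → E} (hf : Tendsto f cofinite (𝓝 0)) {C : ℝ} (hC : 0 < C)
    (h : ∀ i, ‖f i‖ < C) : ‖∑' i, f i‖ < C := by
  classical
  -- Only finitely many `‖f i‖` reach `C / 2`, so the norms are bounded by a maximum `< C`.
  have hfin : {i | C / 2 ≤ ‖f i‖}.Finite := by
    simpa only [not_lt] using Filter.eventually_cofinite.mp <|
      (tendsto_zero_iff_norm_tendsto_zero.mp hf).eventually (gt_mem_nhds (half_pos hC))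
  set T : Finset ℝ := insert (C / 2) (hfin.toFinset.image (‖f ·‖))
  have hT : T.Nonempty := insert_nonempty _ _
  have hhalf : C / 2 ≤ T.max' hT := le_max' _ _ (mem_insert_self _ _)
  refine lt_of_le_of_lt (norm_tsum_le_of_forall_le_of_nonneg ((half_pos hC).le.trans hhalf)
    fun i ↦ ?_) ((max'_lt_iff _ hT).mpr fun y hy ↦ ?_)
  · by_cases hi : C / 2 ≤ ‖f i‖
    · exact le_max' _ _ (mem_insert_of_mem (mem_image_of_mem (‖f ·‖) (hfin.mem_toFinset.mpr hi)))
    · exact (not_le.mp hi).le.trans hhalf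
  · obtain rfl | hy := mem_insert.mp hy
    · exact half_lt_self hC
    · obtain ⟨i, -, rfl⟩ := mem_image.mp hy
      exact h i

def IsLastArgmax {α : Type*} [Preorder α] (g : ℕ → α) (n : ℕ) : Prop :=
  (∀ j, g j ≤ g n) ∧ ∀ j, n < j → g j < g n

theorem IsLastArgmax.unique {α : Type*} [Preorder α] {g : ℕ → α} {m n : ℕ}
    (hm : IsLastArgmax g m) (hn : IsLastArgmax g n) : m = n := by
  rcases lt_trichotomy m n with h | h | h
  · exact absurd (hm.2 n h) (hn.1 m).not_gt
  · exact h
  · exact absurd (hn.2 m h) (hm.1 n).not_gt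

section Unitriangular

variable {R : Type*} [NormedRing R] [IsUltrametricDist R] [CompleteSpace R]
  {a : ℕ → ℕ → R} {b : ℕ → R} {n : ℕ}

theorem IsLastArgmax.tsum_mul_unitriangular (hb : Tendsto b cofinite (𝓝 0))
    (ha : ∀ j k, ‖a j k‖ ≤ 1) (ha_lt : ∀ j k, j < k → a j k = 0) (ha_self : ∀ k, a k k = 1)
    (h : IsLastArgmax (‖b ·‖) n) :
    IsLastArgmax (fun k ↦ ‖∑' j, b j * a j k‖) n ∧ ‖∑' j, b j * a j n‖ = ‖b n‖ := by
  have hpos : 0 < ‖b n‖ := (norm_nonneg _).trans_lt (h.2 _ n.lt_succ_self)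
  have hle : ∀ j k, ‖b j * a j k‖ ≤ ‖b j‖ := fun j k ↦
    (norm_mul_le _ _).trans (mul_le_of_le_one_right (norm_nonneg _) (ha j k))
  have hterm : ∀ k, Tendsto (fun j ↦ b j * a j k) cofinite (𝓝 0) := fun k ↦
    squeeze_zero_norm (fun j ↦ hle j k) (tendsto_zero_iff_norm_tendsto_zero.mp hb)
  have hsmall : ∀ j k, j < k ∨ n < j → ‖b j * a j k‖ < ‖b n‖ := by
    rintro j k (hjk | hnj)
    · simpa [ha_lt j k hjk] using hpos
    · exact (hle j k).trans_lt (h.2 j hnj)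
  have hdiag : ‖∑' j, b j * a j n‖ = ‖b n‖ := by
    have htail : ‖∑' j, if j = n then 0 else b j * a j n‖ < ‖b n‖ := by
      refine IsUltrametricDist.norm_tsum_lt_of_forall_norm_lt
        (squeeze_zero_norm (fun j ↦ ?_) (tendsto_zero_iff_norm_tendsto_zero.mp (hterm n)))
        hpos fun j ↦ ?_
      · split_ifs <;> simp
      · split_ifs with hj
        · simpa using hpos
        · exact hsmall j n (by omega)
    have hsum := NonarchimedeanAddGroup.summable_of_tendsto_cofinite_zero (hterm n)
    rw [hsum.tsum_eq_add_tsum_ite n, ha_self, mul_one,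
      IsUltrametricDist.norm_add_eq_max_of_norm_ne_norm htail.ne',
      max_eq_left htail.le]
  refine ⟨⟨fun k ↦ ?_, fun k hk ↦ ?_⟩, hdiag⟩
  · dsimp only
    rw [hdiag]
    exact IsUltrametricDist.norm_tsum_le_of_forall_le_of_nonneg (norm_nonneg _) fun j ↦
      (hle j k).trans (h.1 j)
  · dsimp only
    rw [hdiag]
    exact IsUltrametricDist.norm_tsum_lt_of_forall_norm_lt (hterm k) hpos fun j ↦
      hsmall j k (by omega)

end Unitriangular

section Padic

variable {p : ℕ} [hp : Fact p.Prime]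

theorem vP_le_vP_iff (x y : ℚ_[p]) : vP p x ≤ vP p y ↔ ‖y‖ ≤ ‖x‖ := by
  rcases eq_or_ne y 0 with rfl | hy
  · simp [vP]
  rcases eq_or_ne x 0 with rfl | hx
  · simp [vP, hy]
  rw [vP, vP, Padic.addValuation.apply hx, Padic.addValuation.apply hy, WithTop.coe_le_coe,
    Padic.norm_eq_zpow_neg_valuation hx, Padic.norm_eq_zpow_neg_valuation hy,
    zpow_le_zpow_iff_right₀ (mod_cast hp.out.one_lt), neg_le_neg_iff]

theorem vP_lt_vP_iff (x y : ℚ_[p]) : vP p x < vP p y ↔ ‖y‖ < ‖x‖ := by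
  rw [lt_iff_not_ge, vP_le_vP_iff, not_le]

theorem isLastArgmax_norm_of_vP {f : ℕ → ℚ_[p]} {n : ℕ} (hmin : ∀ j, vP p (f n) ≤ vP p (f j))
    (hmax : ∀ j, n < j → vP p (f n) < vP p (f j)) : IsLastArgmax (‖f ·‖) n :=
  ⟨fun j ↦ (vP_le_vP_iff _ _).mp (hmin j), fun j hj ↦ (vP_lt_vP_iff _ _).mp (hmax j hj)⟩

theorem PadicInt.eq_factorial_mul_tsum_stirlingSecond {b β : ℕ → ℤ_[p]}
    (hb : Tendsto b atTop (𝓝 0)) (hβ : Tendsto β atTop (𝓝 0))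
    (hagree : ∀ x : ℤ_[p], ∑' j, b j * x ^ j = ∑' k, β k * Ring.choose x k) (k : ℕ) :
    β k = k ! * ∑' j, b j * stirlingSecond j k := by
  have hsum : ∀ y : ℕ → ℤ_[p], Summable fun j ↦ b j * y j := fun y ↦
    NonarchimedeanAddGroup.summable_of_tendsto_cofinite_zero <| by
      rw [Nat.cofinite_eq_atTop]
      refine squeeze_zero_norm (fun j ↦ ?_) (tendsto_zero_iff_norm_tendsto_zero.mp hb)
      exact (norm_mul_le _ _).trans (mul_le_of_le_one_right (norm_nonneg _) (norm_le_one _))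
  have hseries : ⇑(mahlerSeries β) = fun x ↦ ∑' j, b j * x ^ j := by
    ext x
    simp only [mahlerSeries_apply hβ, hagree, mahler_apply, smul_eq_mul, mul_comm]
  calc β k = Δ_[1] ^[k] (mahlerSeries β) 0 := (fwdDiff_mahlerSeries hβ k).symm
    _ = ∑' j, Δ_[1] ^[k] (fun x ↦ b j * x ^ j) 0 := by
      rw [hseries, fwdDiff_iter_tsum_apply _ fun x ↦ hsum (x ^ ·)]
    _ = ∑' j, b j * (k ! * stirlingSecond j k) := by
      refine tsum_congr fun j ↦ ?_
      rw [← fwdDiff_iter_pow_apply_zero]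
      exact congrFun (fwdDiff_iter_const_smul _ (b j) (fun x ↦ x ^ j) k) 0
    _ = k ! * ∑' j, b j * stirlingSecond j k := by
      rw [← (hsum _).tsum_mul_left]
      exact tsum_congr fun j ↦ by ring

end Padic

theorem mahler_power_series_minimal_valuation_general (p : ℕ) [hp : Fact p.Prime]
    (b β : ℕ → ℤ_[p])
    (hb : Tendsto (fun j => ‖b j‖) atTop (nhds 0))
    (hβ : Tendsto (fun k => ‖(β k : ℚ_[p]) / (Nat.factorial k : ℚ_[p])‖) atTop (nhds 0))
    (hagree : ∀ x : ℤ_[p], ∑' j : ℕ, b j * x ^ j = ∑' k : ℕ, β k * Ring.choose x k)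
    (j₀ : ℕ) (hj₀min : ∀ j : ℕ, vP p (b j₀ : ℚ_[p]) ≤ vP p (b j : ℚ_[p]))
    (hj₀max : ∀ j : ℕ, j₀ < j → vP p (b j₀ : ℚ_[p]) < vP p (b j : ℚ_[p]))
    (k₀ : ℕ)
    (hk₀min : ∀ k : ℕ, vP p ((β k₀ : ℚ_[p]) / (Nat.factorial k₀ : ℚ_[p])) ≤
        vP p ((β k : ℚ_[p]) / (Nat.factorial k : ℚ_[p])))
    (hk₀max : ∀ k : ℕ, k₀ < k → vP p ((β k₀ : ℚ_[p]) / (Nat.factorial k₀ : ℚ_[p])) <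
        vP p ((β k : ℚ_[p]) / (Nat.factorial k : ℚ_[p]))) :
    vP p (b j₀ : ℚ_[p]) = vP p ((β k₀ : ℚ_[p]) / (Nat.factorial k₀ : ℚ_[p])) ∧ j₀ = k₀ := by
  have hβ_le : ∀ k, ‖β k‖ ≤ ‖(β k : ℚ_[p]) / (k ! : ℚ_[p])‖ := fun k ↦ by
    rw [norm_div]
    exact le_div_self (norm_nonneg _) (norm_pos_iff.mpr (cast_ne_zero.mpr k.factorial_ne_zero))
      (IsUltrametricDist.norm_natCast_le_one _ _)
  have hb0 : Tendsto b atTop (𝓝 0) := tendsto_zero_iff_norm_tendsto_zero.mpr hb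
  have hβ_eq := PadicInt.eq_factorial_mul_tsum_stirlingSecond hb0 (squeeze_zero_norm hβ_le hβ)
    hagree
  have hdiv : ∀ k, (β k : ℚ_[p]) / (k ! : ℚ_[p]) =
      ((∑' j, b j * stirlingSecond j k : ℤ_[p]) : ℚ_[p]) := fun k ↦ by
    rw [hβ_eq k, PadicInt.coe_mul, PadicInt.coe_natCast,
      mul_div_cancel_left₀ _ (cast_ne_zero.mpr k.factorial_ne_zero)]
  simp only [hdiv] at hk₀min hk₀max ⊢
  obtain ⟨hc_max, hnorm⟩ := (isLastArgmax_norm_of_vP hj₀min hj₀max).tsum_mul_unitriangular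
    (a := fun j k ↦ (stirlingSecond j k : ℤ_[p])) (Nat.cofinite_eq_atTop ▸ hb0)
    (fun j k ↦ PadicInt.norm_le_one _) (fun j k hjk ↦ by simp [stirlingSecond_eq_zero_of_lt hjk])
    (fun k ↦ by simp [stirlingSecond_self])
  obtain rfl := hc_max.unique (isLastArgmax_norm_of_vP hk₀min hk₀max)
  exact ⟨le_antisymm ((vP_le_vP_iff _ _).mpr hnorm.le) ((vP_le_vP_iff _ _).mpr hnorm.ge), rfl⟩

/-- Suppose the power series `∑ b_j x^j` and the Mahler series
`∑ β_k binom(x,k)` (with coefficients in `ℤ_p`, both converging on `ℤ_p`) agree for every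
`x ∈ ℤ_p`, with `b` not identically zero.  If `V = min_j v_p(b_j)` is attained last at `j₀`
and `V' = min_k v_p(β_k/k!)` is attained last at `k₀`, then `V = V'` and `j₀ = k₀`. -/
theorem mahler_power_series_minimal_valuation (p : ℕ) [hp : Fact p.Prime]
    (b β : ℕ → ℤ_[p]) (hb_ne : ∃ j, b j ≠ 0)
    (hb : Tendsto (fun j => ‖b j‖) atTop (nhds 0))
    (hβ : Tendsto (fun k => ‖(β k : ℚ_[p]) / (Nat.factorial k : ℚ_[p])‖) atTop (nhds 0))
    (hagree : ∀ x : ℤ_[p], ∑' j : ℕ, b j * x ^ j = ∑' k : ℕ, β k * Ring.choose x k)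
    (j₀ : ℕ) (hj₀min : ∀ j : ℕ, vP p (b j₀ : ℚ_[p]) ≤ vP p (b j : ℚ_[p]))
    (hj₀max : ∀ j : ℕ, j₀ < j → vP p (b j₀ : ℚ_[p]) < vP p (b j : ℚ_[p]))
    (k₀ : ℕ)
    (hk₀min : ∀ k : ℕ, vP p ((β k₀ : ℚ_[p]) / (Nat.factorial k₀ : ℚ_[p])) ≤
        vP p ((β k : ℚ_[p]) / (Nat.factorial k : ℚ_[p])))
    (hk₀max : ∀ k : ℕ, k₀ < k → vP p ((β k₀ : ℚ_[p]) / (Nat.factorial k₀ : ℚ_[p])) <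
        vP p ((β k : ℚ_[p]) / (Nat.factorial k : ℚ_[p]))) :
    vP p (b j₀ : ℚ_[p]) = vP p ((β k₀ : ℚ_[p]) / (Nat.factorial k₀ : ℚ_[p])) ∧ j₀ = k₀ :=
  mahler_power_series_minimal_valuation_general p (hp := hp) b β hb hβ hagree j₀ hj₀min hj₀max k₀
    hk₀min hk₀max
end

section
/- Let p be a prime and let b : ℕ → ℤ_p be not identically zero with |b_j|_p → 0 as j → ∞. Set V = min_j v_p(b_j) and let j₀ be the largest index j with v_p(b_j) = V. Fix r ∈ ℕ and z ∈ ℤ_p, and for each j ∈ ℕ define c_j = p^{r j} · Σ_{i ≥ j} C(i, j) b_i z^{i−j} ∈ ℤ_p. Then the sequence (c_j) is not identically zero, |c_j|_p → 0, and the largest index j attaining min_j v_p(c_j) is at most j₀. -/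
/-!
Since norms on `ℤ_p` are discrete, `‖b k‖ ≤ ‖b j₀‖ / p` for every `k > j₀`. In the ultrametric
sum defining `c j₀` the term `b j₀` therefore dominates, so `‖c j₀‖ = ‖p ^ (r j₀)‖ ‖b j₀‖`, while
for `j > j₀` every term of the sum has norm at most `‖b j₀‖ / p` and the factor `p ^ (r j)` is
no larger, so `‖c j‖ < ‖c j₀‖`.
-/

open Filter

section Valuation

variable {p : ℕ} [hp : Fact p.Prime]

theorem vP_le_vP_iff_norm_le {x y : ℚ_[p]} : vP p x ≤ vP p y ↔ ‖y‖ ≤ ‖x‖ := by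
  rcases eq_or_ne y 0 with rfl | hy
  · simp [vP]
  rcases eq_or_ne x 0 with rfl | hx
  · simp [vP, hy]
  have hp1 : (1 : ℝ) < p := mod_cast hp.out.one_lt
  rw [vP, vP, Padic.addValuation.apply hx, Padic.addValuation.apply hy, WithTop.coe_le_coe,
    Padic.norm_eq_zpow_neg_valuation hx, Padic.norm_eq_zpow_neg_valuation hy,
    zpow_le_zpow_iff_right₀ hp1, neg_le_neg_iff]

theorem vP_lt_vP_iff_norm_lt {x y : ℚ_[p]} : vP p x < vP p y ↔ ‖y‖ < ‖x‖ := by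
  simp only [lt_iff_not_ge, vP_le_vP_iff_norm_le]

/-- Norms on `ℤ_p` lie in `p ^ ℤ`. -/
theorem norm_le_norm_div_of_norm_lt {x y : ℤ_[p]} (h : ‖y‖ < ‖x‖) : ‖y‖ ≤ ‖x‖ / p := by
  have hx : x ≠ 0 := norm_pos_iff.mp ((norm_nonneg y).trans_lt h)
  have hp0 : (p : ℝ) ≠ 0 := mod_cast hp.out.ne_zero
  rw [PadicInt.norm_eq_zpow_neg_valuation hx, PadicInt.norm_lt_pow_iff_norm_le_pow_sub_one] at h
  rwa [PadicInt.norm_eq_zpow_neg_valuation hx, div_eq_mul_inv, ← zpow_sub_one₀ hp0]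

end Valuation

section TaylorCoeff

variable {R : Type*} [NormedCommRing R] [NormOneClass R] [IsUltrametricDist R]

/-- The `j`-th coefficient of `F(x + z)` for `F(x) = ∑ bᵢ xⁱ`. -/
noncomputable def taylorCoeff (b : ℕ → R) (z : R) (j : ℕ) : R :=
  ∑' i, ((j + i).choose j : R) * b (j + i) * z ^ i

variable {b : ℕ → R} {z : R}

theorem norm_taylorTerm_le (hz : ‖z‖ ≤ 1) (j i : ℕ) :
    ‖((j + i).choose j : R) * b (j + i) * z ^ i‖ ≤ ‖b (j + i)‖ := by
  have hzi : ‖z ^ i‖ ≤ 1 := (norm_pow_le z i).trans (pow_le_one₀ (norm_nonneg z) hz)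
  calc ‖((j + i).choose j : R) * b (j + i) * z ^ i‖
      ≤ ‖((j + i).choose j : R)‖ * ‖b (j + i)‖ * ‖z ^ i‖ := norm_mul₃_le
    _ ≤ 1 * ‖b (j + i)‖ * 1 := by
      gcongr
      exact IsUltrametricDist.norm_natCast_le_one R _
    _ = ‖b (j + i)‖ := by ring

theorem norm_taylorCoeff_le (hz : ‖z‖ ≤ 1) {j : ℕ} {C : ℝ} (hC : 0 ≤ C)
    (hbC : ∀ k, j ≤ k → ‖b k‖ ≤ C) : ‖taylorCoeff b z j‖ ≤ C :=
  IsUltrametricDist.norm_tsum_le_of_forall_le_of_nonneg hC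
    fun i => (norm_taylorTerm_le hz j i).trans (hbC _ (Nat.le_add_right j i))

theorem tendsto_norm_taylorCoeff (hz : ‖z‖ ≤ 1) (hb : Tendsto (fun j => ‖b j‖) atTop (nhds 0)) :
    Tendsto (fun j => ‖taylorCoeff b z j‖) atTop (nhds 0) := by
  refine tendsto_order.2 ⟨fun a ha => .of_forall fun j => ha.trans_le (norm_nonneg _),
    fun ε hε => ?_⟩
  obtain ⟨δ, hδ, hδε⟩ := exists_between hε
  obtain ⟨N, hN⟩ := eventually_atTop.mp (hb.eventually (ge_mem_nhds hδ))
  exact eventually_atTop.mpr ⟨N, fun j hj =>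
    (norm_taylorCoeff_le hz hδ.le fun k hk => hN k (hj.trans hk)).trans_lt hδε⟩

theorem summable_taylorTerm [CompleteSpace R] (hz : ‖z‖ ≤ 1)
    (hb : Tendsto (fun j => ‖b j‖) atTop (nhds 0)) (j : ℕ) :
    Summable fun i => ((j + i).choose j : R) * b (j + i) * z ^ i := by
  apply NonarchimedeanAddGroup.summable_of_tendsto_cofinite_zero
  rw [Nat.cofinite_eq_atTop, tendsto_zero_iff_norm_tendsto_zero]
  have hb_shift : Tendsto (fun i => ‖b (j + i)‖) atTop (nhds 0) :=
    by simpa only [add_comm j, Function.comp_def] using hb.comp (tendsto_add_atTop_nat j)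
  exact squeeze_zero (fun i => norm_nonneg _) (norm_taylorTerm_le hz j) hb_shift

/-- The `i = 0` term `b j` dominates the ultrametric sum. -/
theorem norm_taylorCoeff_eq_of_tail_le [CompleteSpace R] (hz : ‖z‖ ≤ 1)
    (hb : Tendsto (fun j => ‖b j‖) atTop (nhds 0)) {j : ℕ} {C : ℝ} (hC : 0 ≤ C)
    (hCj : C < ‖b j‖) (htail : ∀ k, j < k → ‖b k‖ ≤ C) :
    ‖taylorCoeff b z j‖ = ‖b j‖ := by
  have hrest : ‖∑' i, ((j + (i + 1)).choose j : R) * b (j + (i + 1)) * z ^ (i + 1)‖ ≤ C :=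
    IsUltrametricDist.norm_tsum_le_of_forall_le_of_nonneg hC
      fun i => (norm_taylorTerm_le hz j (i + 1)).trans (htail _ (by omega))
  rw [taylorCoeff, (summable_taylorTerm hz hb j).tsum_eq_zero_add]
  simp only [add_zero, Nat.choose_self, Nat.cast_one, one_mul, pow_zero, mul_one]
  rw [IsUltrametricDist.norm_add_eq_max_of_norm_ne_norm (hrest.trans_lt hCj).ne',
    max_eq_left (hrest.trans hCj.le)]

end TaylorCoeff

section Substitution

variable {p : ℕ} [hp : Fact p.Prime]

theorem norm_pow_mul_taylorCoeff_lt {b : ℕ → ℤ_[p]} (hb : Tendsto (fun j => ‖b j‖) atTop (nhds 0))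
    {j₀ : ℕ} (hj₀ : ∀ k, j₀ < k → ‖b k‖ < ‖b j₀‖) (r : ℕ) (z : ℤ_[p]) {j : ℕ} (hj : j₀ < j) :
    ‖(p : ℤ_[p]) ^ (r * j) * taylorCoeff b z j‖ < ‖(p : ℤ_[p]) ^ (r * j₀) * taylorCoeff b z j₀‖ := by
  have hz : ‖z‖ ≤ 1 := PadicInt.norm_le_one z
  have hp1 : (1 : ℝ) < p := mod_cast hp.out.one_lt
  have hbj₀ : 0 < ‖b j₀‖ := (norm_nonneg _).trans_lt (hj₀ (j₀ + 1) j₀.lt_succ_self)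
  have htail : ∀ k, j₀ < k → ‖b k‖ ≤ ‖b j₀‖ / p :=
    fun k hk => norm_le_norm_div_of_norm_lt (hj₀ k hk)
  have hlead : ‖taylorCoeff b z j₀‖ = ‖b j₀‖ :=
    norm_taylorCoeff_eq_of_tail_le hz hb (by positivity) (div_lt_self hbj₀ hp1) htail
  have hj_le : ‖taylorCoeff b z j‖ ≤ ‖b j₀‖ / p :=
    norm_taylorCoeff_le hz (by positivity) fun k hk => htail k (hj.trans_le hk)
  have hpow : ‖(p : ℤ_[p])‖ ^ (r * j) ≤ ‖(p : ℤ_[p])‖ ^ (r * j₀) :=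
    pow_le_pow_of_le_one (norm_nonneg _) (PadicInt.norm_le_one _)
      (Nat.mul_le_mul_left r hj.le)
  have hpow_pos : 0 < ‖(p : ℤ_[p])‖ ^ (r * j₀) :=
    pow_pos (norm_pos_iff.mpr (mod_cast hp.out.ne_zero)) _
  rw [norm_mul, norm_mul, norm_pow, norm_pow, hlead]
  calc ‖(p : ℤ_[p])‖ ^ (r * j) * ‖taylorCoeff b z j‖
      ≤ ‖(p : ℤ_[p])‖ ^ (r * j₀) * (‖b j₀‖ / p) := by gcongr
    _ < ‖(p : ℤ_[p])‖ ^ (r * j₀) * ‖b j₀‖ := by gcongr; exact div_lt_self hbj₀ hp1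

end Substitution

theorem substituted_series_min_index_le_general (p : ℕ) [hp : Fact p.Prime]
    (b : ℕ → ℤ_[p])
    (hb : Tendsto (fun j => ‖b j‖) atTop (nhds 0))
    (j₀ : ℕ)
    (hj₀max : ∀ j : ℕ, j₀ < j → vP p (b j₀ : ℚ_[p]) < vP p (b j : ℚ_[p]))
    (r : ℕ) (z : ℤ_[p]) (c : ℕ → ℤ_[p])
    (hc : ∀ j : ℕ, c j = (p : ℤ_[p]) ^ (r * j) *
      ∑' i : ℕ, ((j + i).choose j : ℤ_[p]) * b (j + i) * z ^ i) :
    (∃ j, c j ≠ 0) ∧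
    Tendsto (fun j => ‖c j‖) atTop (nhds 0) ∧
    ∀ j : ℕ, (∀ i : ℕ, vP p (c j : ℚ_[p]) ≤ vP p (c i : ℚ_[p])) → j ≤ j₀ := by
  have hc_lt : ∀ j, j₀ < j → ‖c j‖ < ‖c j₀‖ := by
    intro j hj
    rw [hc, hc]
    refine norm_pow_mul_taylorCoeff_lt hb (fun k hk => ?_) r z hj
    simpa only [PadicInt.padic_norm_e_of_padicInt] using vP_lt_vP_iff_norm_lt.mp (hj₀max k hk)
  refine ⟨⟨j₀, norm_pos_iff.mp ((norm_nonneg _).trans_lt (hc_lt _ j₀.lt_succ_self))⟩, ?_, ?_⟩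
  · refine squeeze_zero (fun j => norm_nonneg _) (fun j => ?_)
      (tendsto_norm_taylorCoeff (PadicInt.norm_le_one z) hb)
    rw [hc, norm_mul]
    exact mul_le_of_le_one_left (norm_nonneg _) (PadicInt.norm_le_one _)
  · intro j hmin
    by_contra! hj
    have hle := vP_le_vP_iff_norm_le.mp (hmin j₀)
    simp only [PadicInt.padic_norm_e_of_padicInt] at hle
    exact (hc_lt j hj).not_ge hle

/-- Let `b : ℕ → ℤ_p` be not identically zero with `|b_j|_p → 0`,
`V = min_j v_p(b_j)` attained last at `j₀`.  Fix `r ∈ ℕ` and `z ∈ ℤ_p`, and let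
`c_j = p^{r j} ∑_{i ≥ j} C(i,j) b_i z^{i−j}`.  Then `c` is not identically zero,
`|c_j|_p → 0`, and the largest index attaining `min_j v_p(c_j)` is at most `j₀`. -/
theorem substituted_series_min_index_le (p : ℕ) [hp : Fact p.Prime]
    (b : ℕ → ℤ_[p]) (hb_ne : ∃ j, b j ≠ 0)
    (hb : Tendsto (fun j => ‖b j‖) atTop (nhds 0))
    (j₀ : ℕ) (hj₀min : ∀ j : ℕ, vP p (b j₀ : ℚ_[p]) ≤ vP p (b j : ℚ_[p]))
    (hj₀max : ∀ j : ℕ, j₀ < j → vP p (b j₀ : ℚ_[p]) < vP p (b j : ℚ_[p]))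
    (r : ℕ) (z : ℤ_[p]) (c : ℕ → ℤ_[p])
    (hc : ∀ j : ℕ, c j = (p : ℤ_[p]) ^ (r * j) *
      ∑' i : ℕ, ((j + i).choose j : ℤ_[p]) * b (j + i) * z ^ i) :
    (∃ j, c j ≠ 0) ∧
    Tendsto (fun j => ‖c j‖) atTop (nhds 0) ∧
    ∀ j : ℕ, (∀ i : ℕ, vP p (c j : ℚ_[p]) ≤ vP p (c i : ℚ_[p])) → j ≤ j₀ :=
  substituted_series_min_index_le_general p (hp := hp) b hb j₀ hj₀max r z c hc
end
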